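/- For every n ≥ 3 and every set S = {i₁,i₂,i₃} of 3 indices in {1,...,n}, there exists a one-hidden-layer ReLU network with only 6 hidden neurons computing the (n,3)-parity: for all x ∈ {−1,1}^n, sign(f(x)) = x_{i₁} x_{i₂} x_{i₃}. -/

import Mathlib

private lemma cons_val_five' (a₀ a₁ a₂ a₃ a₄ a₅ : ℝ) :
    ![a₀, a₁, a₂, a₃, a₄, a₅] 5 = a₅ := by
  rw [show (5 : Fin 6) = (4 : Fin 5).succ from rfl, Matrix.cons_val_succ]
  simp

theorem parity3_6_neurons (n : ℕ) (hn : 3 ≤ n) (S : Finset (Fin n)) (hS : S.card = 3) :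
    ∃ (u : Fin 6 → ℝ) (W : Fin 6 → Fin n → ℝ) (b : Fin 6 → ℝ),
      ∀ x : Fin n → ℝ, (∀ i, x i = 1 ∨ x i = -1) →
        Real.sign (∑ j, u j * max 0 (∑ i, W j i * x i + b j)) = ∏ i ∈ S, x i := by
  obtain ⟨a, b, c, hab, hac, hbc, rfl⟩ := Finset.card_eq_three.mp hS
  refine ⟨![-1, 10, 10, -1, 10, 10],
    fun j i => (if i = a then (![-1, -1, 1, 1, -1, 1] : Fin 6 → ℝ) j else 0) +
      (if i = b then (![-1, -1, 1, -1, 1, -1] : Fin 6 → ℝ) j else 0) +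
      (if i = c then (![10, 1, 1, -10, -1, -1] : Fin 6 → ℝ) j else 0),
    ![-9, -2, -2, -9, -2, -2], fun x hx => ?_⟩
  have hsum : ∀ j : Fin 6,
      (∑ i, ((if i = a then (![-1, -1, 1, 1, -1, 1] : Fin 6 → ℝ) j else 0) +
        (if i = b then (![-1, -1, 1, -1, 1, -1] : Fin 6 → ℝ) j else 0) +
        (if i = c then (![10, 1, 1, -10, -1, -1] : Fin 6 → ℝ) j else 0)) * x i) =
        (![-1, -1, 1, 1, -1, 1] : Fin 6 → ℝ) j * x a +
        (![-1, -1, 1, -1, 1, -1] : Fin 6 → ℝ) j * x b +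
        (![10, 1, 1, -10, -1, -1] : Fin 6 → ℝ) j * x c := by
    intro j
    have key : ∀ i : Fin n,
        ((if i = a then (![-1, -1, 1, 1, -1, 1] : Fin 6 → ℝ) j else 0) +
        (if i = b then (![-1, -1, 1, -1, 1, -1] : Fin 6 → ℝ) j else 0) +
        (if i = c then (![10, 1, 1, -10, -1, -1] : Fin 6 → ℝ) j else 0)) * x i =
        (if i = a then (![-1, -1, 1, 1, -1, 1] : Fin 6 → ℝ) j * x i else 0) +
        (if i = b then (![-1, -1, 1, -1, 1, -1] : Fin 6 → ℝ) j * x i else 0) +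
        (if i = c then (![10, 1, 1, -10, -1, -1] : Fin 6 → ℝ) j * x i else 0) := by
      intro i
      split_ifs <;> ring
    rw [Finset.sum_congr rfl fun i _ => key i, Finset.sum_add_distrib,
      Finset.sum_add_distrib]
    simp [Finset.sum_ite_eq']
  simp only [hsum]
  rw [Finset.prod_insert (by simp [hab, hac]), Finset.prod_insert (by simp [hbc]),
    Finset.prod_singleton]
  rcases hx a with h1 | h1 <;> rcases hx b with h2 | h2 <;> rcases hx c with h3 | h3 <;>
    rw [h1, h2, h3] <;>
    first
    | (rw [Real.sign_of_pos] <;>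
        norm_num [Fin.sum_univ_six, cons_val_five', max_def, Matrix.cons_val_two,
          Matrix.cons_val_three, Matrix.cons_val_four] <;> done)
    | (rw [Real.sign_of_neg] <;>
        norm_num [Fin.sum_univ_six, cons_val_five', max_def, Matrix.cons_val_two,
          Matrix.cons_val_three, Matrix.cons_val_four] <;> done)
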